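/- Let X₁, X₂ be independent with X_i ~ Gamma(α, θ_i), θ_i > 0, α > 0, and let Z₁ = min{X₁,X₂}, H_M(θ) = ln θ₁ · 1{X₁ ≤ X₂} + ln θ₂ · 1{X₁ > X₂}, and θ = min{θ₁,θ₂}/max{θ₁,θ₂} ∈ (0,1]. Then E[ln Z₁ − H_M(θ)] = ∫₀^∞ ln(z)[1 − G_α(θz)] g_α(z) dz + ∫₀^∞ ln(z)[1 − G_α(z/θ)] g_α(z) dz. -/

import Mathlib

/-!
Write `X_i = θ_i Y_i` with `Y₁, Y₂` independent `Gamma(α, 1)`. Almost surely both `Y_i` are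
positive, and then `log (min X₁ X₂) - H_M` equals `log Y₁` on `{θ₁ Y₁ ≤ θ₂ Y₂}` and `log Y₂` on
the complement. Integrating out the other variable first (Fubini), each part becomes `log y`
integrated against the probability that the other variable exceeds `(θ₁ / θ₂) y`, resp.
`(θ₂ / θ₁) y`, i.e. against `1 - G_α`; the two ratios are `θ` and `θ⁻¹` in some order.
-/

open MeasureTheory ProbabilityTheory

/-- CDF of the Gamma(α,1) distribution. -/
noncomputable def gammaCDF (α x : ℝ) : ℝ := ∫ t in Set.Iic x, gammaPDFReal α 1 t

open Real Set Asymptotics Filter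
open scoped ENNReal Topology

theorem MeasureTheory.Measure.map_withDensity_of_leftInverse {α β : Type*} [MeasurableSpace α]
    [MeasurableSpace β] {μ : Measure α} {ρ : α → ℝ≥0∞} {f : α → β} {g : β → α}
    (hf : Measurable f) (hρg : Measurable (ρ ∘ g)) (hgf : Function.LeftInverse g f) :
    (μ.withDensity ρ).map f = (μ.map f).withDensity (ρ ∘ g) := by
  ext s hs
  rw [Measure.map_apply hf hs, withDensity_apply _ (hf hs), withDensity_apply _ hs,
    setLIntegral_map hs hρg hf]
  simp only [Function.comp_apply, hgf _]

section Fubini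

variable {α β : Type*} [MeasurableSpace α] [MeasurableSpace β] {ν : Measure α} {ν' : Measure β}
  {S : Set (α × β)}

theorem integral_indicator_comp_fst_prod [SFinite ν] [IsFiniteMeasure ν'] (hS : MeasurableSet S)
    {f : α → ℝ} (hf : Integrable f ν) :
    ∫ q, S.indicator (fun q => f q.1) q ∂(ν.prod ν') = ∫ x, ν'.real (Prod.mk x ⁻¹' S) * f x ∂ν := by
  rw [integral_prod _ ((hf.comp_fst ν').indicator hS)]
  congr 1 with x
  rw [← smul_eq_mul, ← integral_indicator_const _ (measurable_prodMk_left hS)]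
  rfl

theorem integral_indicator_comp_snd_prod [IsFiniteMeasure ν] [SFinite ν'] (hS : MeasurableSet S)
    {f : β → ℝ} (hf : Integrable f ν') :
    ∫ q, S.indicator (fun q => f q.2) q ∂(ν.prod ν') =
      ∫ y, ν.real ((fun x => (x, y)) ⁻¹' S) * f y ∂ν' := by
  rw [← integral_prod_swap]
  exact integral_indicator_comp_fst_prod (measurable_swap hS) hf

end Fubini

namespace ProbabilityTheory

variable {a r : ℝ}

theorem gammaPDFReal_div_const (hr : 0 ≤ r) {c : ℝ} (hc : 0 < c) (x : ℝ) :
    gammaPDFReal a (r / c) x = c⁻¹ * gammaPDFReal a r (x / c) := by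
  by_cases hx : 0 ≤ x
  · have hxc : 0 ≤ x / c := div_nonneg hx hc.le
    rw [gammaPDFReal, gammaPDFReal, if_pos hx, if_pos hxc, div_rpow hr hc.le,
      div_rpow hx hc.le, rpow_sub_one hc.ne', show r / c * x = r * (x / c) by ring]
    field_simp
  · have hxc : ¬0 ≤ x / c := not_le.mpr (div_neg_of_neg_of_pos (not_le.mp hx) hc)
    rw [gammaPDFReal, gammaPDFReal, if_neg hx, if_neg hxc, mul_zero]

theorem gammaMeasure_map_const_mul (hr : 0 ≤ r) {c : ℝ} (hc : 0 < c) :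
    (gammaMeasure a r).map (c * ·) = gammaMeasure a (r / c) := by
  have hdens : Measurable (gammaPDF a r ∘ (· / c)) :=
    ((measurable_gammaPDFReal a r).comp (measurable_id.div_const c)).ennreal_ofReal
  rw [gammaMeasure, Measure.map_withDensity_of_leftInverse (measurable_const_mul c) hdens
      (fun x => by field_simp), Real.map_volume_mul_left hc.ne', withDensity_smul_measure,
    ← withDensity_smul _ hdens, gammaMeasure]
  congr 1
  funext x
  rw [Pi.smul_apply, Function.comp_apply, gammaPDF, gammaPDF, gammaPDFReal_div_const hr hc,
    abs_of_pos (inv_pos.mpr hc), smul_eq_mul, ENNReal.ofReal_mul (inv_nonneg.mpr hc.le)]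

theorem measurable_gammaPDF : Measurable (gammaPDF a r) :=
  (measurable_gammaPDFReal a r).ennreal_ofReal

instance : SFinite (gammaMeasure a r) := by
  unfold gammaMeasure; infer_instance

instance : NullSingletonClass (gammaMeasure a r) := by
  unfold gammaMeasure; infer_instance

theorem ae_gammaMeasure_pos : ∀ᵐ x ∂gammaMeasure a r, 0 < x := by
  rw [gammaMeasure, ae_withDensity_iff measurable_gammaPDF]
  filter_upwards [(measure_eq_zero_iff_ae_notMem.mp (measure_singleton (0 : ℝ)))] with x hx hpdf
  exact lt_of_le_of_ne (not_lt.mp fun hneg => hpdf (gammaPDF_of_neg hneg)) (Ne.symm hx)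

theorem integral_gammaMeasure (ha : 0 < a) (hr : 0 < r) (f : ℝ → ℝ) :
    ∫ x, f x ∂gammaMeasure a r = ∫ x in Ioi 0, f x * gammaPDFReal a r x := by
  rw [gammaMeasure, integral_withDensity_eq_integral_toReal_smul measurable_gammaPDF
      (ae_of_all _ fun _ => ENNReal.ofReal_lt_top), ← integral_Ici_eq_integral_Ioi,
    ← setIntegral_eq_integral_of_forall_compl_eq_zero]
  · refine setIntegral_congr_fun measurableSet_Ici fun x _ => ?_
    rw [gammaPDF, ENNReal.toReal_ofReal (gammaPDFReal_nonneg ha hr x), smul_eq_mul, mul_comm]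
  · intro x hx
    rw [gammaPDF_of_neg (not_le.mp hx), ENNReal.toReal_zero, zero_smul]

theorem integrableOn_rpow_mul_log_mul_exp_neg {s : ℝ} (hs : 0 < s) :
    IntegrableOn (fun t : ℝ => t ^ (s - 1) * (log t * exp (-t))) (Ioi 0) := by
  have hexp_top : (fun t : ℝ => exp (-t)) =O[atTop] (· ^ (-(s + 2))) := by
    simpa only [neg_one_mul] using (isLittleO_exp_neg_mul_rpow_atTop zero_lt_one _).isBigO
  have hexp_bot : (fun t : ℝ => exp (-t)) =O[𝓝[>] 0] (· ^ (-(0 : ℝ))) := by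
    simp_rw [neg_zero, rpow_zero]
    refine isBigO_const_of_tendsto (y := 1) ?_ one_ne_zero
    simpa using (continuous_neg.rexp.tendsto 0).mono_left nhdsWithin_le_nhds
  refine mellin_convergent_of_isBigO_scalar (a := s + 1) (b := s / 2) ?_
    (isBigO_rpow_top_log_smul (by linarith) hexp_top) (by linarith)
    (isBigO_rpow_zero_log_smul (by positivity) hexp_bot) (by linarith)
  exact ((continuousOn_log.mono fun t (ht : 0 < t) => ht.ne').mul
    continuous_neg.rexp.continuousOn).locallyIntegrableOn measurableSet_Ioi

theorem integrable_log_gammaMeasure (ha : 0 < a) : Integrable log (gammaMeasure a 1) := by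
  rw [gammaMeasure, integrable_withDensity_iff_integrable_smul' measurable_gammaPDF
    (ae_of_all _ fun _ => ENNReal.ofReal_lt_top)]
  refine IntegrableOn.integrable_of_forall_notMem_eq_zero (s := Ioi 0) ?_ fun x hx => ?_
  · refine IntegrableOn.congr_fun ((integrableOn_rpow_mul_log_mul_exp_neg ha).const_mul
      (Gamma a)⁻¹) (fun x (hx : 0 < x) => ?_) measurableSet_Ioi
    rw [gammaPDF, ENNReal.toReal_ofReal (gammaPDFReal_nonneg ha one_pos x), gammaPDFReal,
      if_pos hx.le, one_rpow, one_mul, smul_eq_mul]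
    ring
  · rcases (not_lt.mp (show ¬0 < x from hx)).lt_or_eq with hneg | rfl
    · rw [gammaPDF_of_neg hneg, ENNReal.toReal_zero, zero_smul]
    · rw [log_zero, smul_zero]

theorem gammaCDF_eq_cdf (ha : 0 < a) (x : ℝ) : gammaCDF a x = cdf (gammaMeasure a 1) x :=
  (cdf_gammaMeasure_eq_integral ha one_pos x).symm

theorem gammaMeasure_real_Ioi (ha : 0 < a) (x : ℝ) :
    (gammaMeasure a 1).real (Ioi x) = 1 - gammaCDF a x := by
  have := isProbabilityMeasure_gammaMeasure ha one_pos
  rw [gammaCDF_eq_cdf ha, cdf_eq_real, ← compl_Iic, probReal_compl_eq_one_sub measurableSet_Iic]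

theorem gammaMeasure_real_Ici (ha : 0 < a) (x : ℝ) :
    (gammaMeasure a 1).real (Ici x) = 1 - gammaCDF a x := by
  rw [← gammaMeasure_real_Ioi ha, measureReal_congr Ioi_ae_eq_Ici]

end ProbabilityTheory

/-- `E[log Y · 1{c Y ≤ Y'}]` for independent `Y, Y' ~ Gamma(α, 1)`. -/
noncomputable def logSurvivalIntegral (α c : ℝ) : ℝ :=
  ∫ z in Ioi 0, log z * (1 - gammaCDF α (c * z)) * gammaPDFReal α 1 z

section SelectedLog

variable {α θ₁ θ₂ : ℝ}

theorem integral_indicator_log_fst_gammaMeasure_prod (hα : 0 < α) (hθ₂ : 0 < θ₂) :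
    ∫ q, {q : ℝ × ℝ | θ₁ * q.1 ≤ θ₂ * q.2}.indicator (fun q => log q.1) q
        ∂(gammaMeasure α 1).prod (gammaMeasure α 1) = logSurvivalIntegral α (θ₁ / θ₂) := by
  have := isProbabilityMeasure_gammaMeasure hα one_pos
  rw [integral_indicator_comp_fst_prod (measurableSet_le (by fun_prop) (by fun_prop))
    (integrable_log_gammaMeasure hα), integral_gammaMeasure hα one_pos, logSurvivalIntegral]
  refine setIntegral_congr_fun measurableSet_Ioi fun z _ => ?_
  have hslice : Prod.mk z ⁻¹' {q : ℝ × ℝ | θ₁ * q.1 ≤ θ₂ * q.2} = Ici (θ₁ / θ₂ * z) := by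
    ext y
    simp only [mem_preimage, mem_ofPred_eq, mem_Ici, div_mul_eq_mul_div, div_le_iff₀ hθ₂,
      mul_comm y]
  rw [hslice, gammaMeasure_real_Ici hα]
  ring

theorem integral_indicator_log_snd_gammaMeasure_prod (hα : 0 < α) (hθ₁ : 0 < θ₁) :
    ∫ q, {q : ℝ × ℝ | θ₂ * q.2 < θ₁ * q.1}.indicator (fun q => log q.2) q
        ∂(gammaMeasure α 1).prod (gammaMeasure α 1) = logSurvivalIntegral α (θ₂ / θ₁) := by
  have := isProbabilityMeasure_gammaMeasure hα one_pos
  rw [integral_indicator_comp_snd_prod (measurableSet_lt (by fun_prop) (by fun_prop))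
    (integrable_log_gammaMeasure hα), integral_gammaMeasure hα one_pos, logSurvivalIntegral]
  refine setIntegral_congr_fun measurableSet_Ioi fun z _ => ?_
  have hslice :
      (fun x => (x, z)) ⁻¹' {q : ℝ × ℝ | θ₂ * q.2 < θ₁ * q.1} = Ioi (θ₂ / θ₁ * z) := by
    ext x
    simp only [mem_preimage, mem_ofPred_eq, mem_Ioi, div_mul_eq_mul_div, div_lt_iff₀ hθ₁,
      mul_comm x]
  rw [hslice, gammaMeasure_real_Ioi hα]
  ring

theorem log_min_mul_sub_ite_log (hθ₁ : 0 < θ₁) (hθ₂ : 0 < θ₂) {q : ℝ × ℝ} (hq₁ : 0 < q.1)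
    (hq₂ : 0 < q.2) :
    log (min (θ₁ * q.1) (θ₂ * q.2)) - (if θ₁ * q.1 ≤ θ₂ * q.2 then log θ₁ else log θ₂) =
      {q : ℝ × ℝ | θ₁ * q.1 ≤ θ₂ * q.2}.indicator (fun q => log q.1) q +
        {q : ℝ × ℝ | θ₂ * q.2 < θ₁ * q.1}.indicator (fun q => log q.2) q := by
  simp only [indicator_apply, mem_ofPred_eq]
  by_cases h : θ₁ * q.1 ≤ θ₂ * q.2
  · rw [min_eq_left h, if_pos h, if_pos h, if_neg h.not_gt, log_mul hθ₁.ne' hq₁.ne']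
    ring
  · rw [min_eq_right (not_le.mp h).le, if_neg h, if_neg h, if_pos (not_le.mp h),
      log_mul hθ₂.ne' hq₂.ne']
    ring

theorem integral_log_min_mul_sub_ite_gammaMeasure_prod (hα : 0 < α) (hθ₁ : 0 < θ₁)
    (hθ₂ : 0 < θ₂) :
    ∫ q, (log (min (θ₁ * q.1) (θ₂ * q.2)) - (if θ₁ * q.1 ≤ θ₂ * q.2 then log θ₁ else log θ₂))
        ∂(gammaMeasure α 1).prod (gammaMeasure α 1) =
      logSurvivalIntegral α (θ₁ / θ₂) + logSurvivalIntegral α (θ₂ / θ₁) := by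
  have := isProbabilityMeasure_gammaMeasure hα one_pos
  have hlog := integrable_log_gammaMeasure hα
  rw [← integral_indicator_log_fst_gammaMeasure_prod hα hθ₂,
    ← integral_indicator_log_snd_gammaMeasure_prod hα hθ₁,
    ← integral_add ((hlog.comp_fst _).indicator (measurableSet_le (by fun_prop) (by fun_prop)))
      ((hlog.comp_snd _).indicator (measurableSet_lt (by fun_prop) (by fun_prop)))]
  refine integral_congr_ae ?_
  filter_upwards [Measure.quasiMeasurePreserving_fst.ae ae_gammaMeasure_pos,
    Measure.quasiMeasurePreserving_snd.ae ae_gammaMeasure_pos] with q hq₁ hq₂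
  exact log_min_mul_sub_ite_log hθ₁ hθ₂ hq₁ hq₂

end SelectedLog

theorem map_prod_eq_map_gammaMeasure_prod {Ω : Type*} [MeasurableSpace Ω] {μ : Measure Ω}
    [IsFiniteMeasure μ] {α θ₁ θ₂ : ℝ} (hθ₁ : 0 < θ₁) (hθ₂ : 0 < θ₂) {X₁ X₂ : Ω → ℝ}
    (hm₁ : Measurable X₁) (hm₂ : Measurable X₂) (h₁ : μ.map X₁ = gammaMeasure α (1 / θ₁))
    (h₂ : μ.map X₂ = gammaMeasure α (1 / θ₂)) (hind : IndepFun X₁ X₂ μ) :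
    μ.map (fun ω => (X₁ ω, X₂ ω)) =
      ((gammaMeasure α 1).prod (gammaMeasure α 1)).map (Prod.map (θ₁ * ·) (θ₂ * ·)) := by
  rw [hind.map_prod_eq_prod_map_map hm₁.aemeasurable hm₂.aemeasurable, h₁, h₂,
    ← gammaMeasure_map_const_mul zero_le_one hθ₁, ← gammaMeasure_map_const_mul zero_le_one hθ₂,
    Measure.map_prod_map _ _ (measurable_const_mul θ₁) (measurable_const_mul θ₂)]

theorem expectation_log_min_sub_selected {Ω : Type*} [MeasurableSpace Ω] (μ : Measure Ω)
    [IsProbabilityMeasure μ] (α θ₁ θ₂ : ℝ) (hα : 0 < α) (hθ₁ : 0 < θ₁) (hθ₂ : 0 < θ₂)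
    (X₁ X₂ : Ω → ℝ) (hm₁ : Measurable X₁) (hm₂ : Measurable X₂)
    (h₁ : Measure.map X₁ μ = gammaMeasure α (1 / θ₁))
    (h₂ : Measure.map X₂ μ = gammaMeasure α (1 / θ₂))
    (hind : IndepFun X₁ X₂ μ) (θr : ℝ) (hθr : θr = min θ₁ θ₂ / max θ₁ θ₂) :
    ∫ ω, (Real.log (min (X₁ ω) (X₂ ω)) -
        (if X₁ ω ≤ X₂ ω then Real.log θ₁ else Real.log θ₂)) ∂μ =
      (∫ z in Set.Ioi (0:ℝ), Real.log z * (1 - gammaCDF α (θr * z)) * gammaPDFReal α 1 z) +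
        ∫ z in Set.Ioi (0:ℝ), Real.log z * (1 - gammaCDF α (z / θr)) * gammaPDFReal α 1 z := by
  let F : ℝ × ℝ → ℝ := fun p => log (min p.1 p.2) - if p.1 ≤ p.2 then log θ₁ else log θ₂
  have hF : Measurable F := by
    refine (measurable_log.comp (measurable_fst.min measurable_snd)).sub ?_
    exact Measurable.ite (measurableSet_le measurable_fst measurable_snd) measurable_const
      measurable_const
  calc ∫ ω, F (X₁ ω, X₂ ω) ∂μ
      = ∫ q, F (θ₁ * q.1, θ₂ * q.2) ∂(gammaMeasure α 1).prod (gammaMeasure α 1) := by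
        rw [← integral_map (hm₁.prodMk hm₂).aemeasurable hF.aestronglyMeasurable,
          map_prod_eq_map_gammaMeasure_prod hθ₁ hθ₂ hm₁ hm₂ h₁ h₂ hind,
          integral_map (by fun_prop) hF.aestronglyMeasurable]
        rfl
    _ = logSurvivalIntegral α (θ₁ / θ₂) + logSurvivalIntegral α (θ₂ / θ₁) :=
        integral_log_min_mul_sub_ite_gammaMeasure_prod hα hθ₁ hθ₂
    _ = logSurvivalIntegral α θr + logSurvivalIntegral α θr⁻¹ := by
        rcases le_total θ₁ θ₂ with h | h
        · rw [hθr, min_eq_left h, max_eq_right h, inv_div]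
        · rw [hθr, min_eq_right h, max_eq_left h, inv_div, add_comm]
    _ = _ := by simp only [logSurvivalIntegral, div_eq_inv_mul _ θr]
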